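/- Fix a time horizon T ≥ 1 and a finite alphabet O with |O| = m+1. For every function s : O^T → ℝ there exist a constant c ∈ ℝ and functions U_t : O^t → ℝ^m for t = 0,1,...,T-1 (where O^0 is a point) such that s(z_1,...,z_T) = c - ∑_{t=1}^{T} ⟨U_{t-1}(z_1,...,z_{t-1}), e(z_t)⟩ for all (z_1,...,z_T) ∈ O^T, where e is the balanced encoding of O into ℝ^m. Moreover c and the functions U_t are unique. -/

import Mathlib

open Finset

def stdBasis (m : ℕ) (i : Fin m) : Fin m → ℝ := fun j => if j = i then 1 else 0

/-- The balanced encoding `e : {0,1,…,m} → ℝ^m`. -/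
def balancedEncoding (m : ℕ) (z : Fin (m + 1)) : Fin m → ℝ :=
  if h : (z : ℕ) = 0 then -∑ i : Fin m, stdBasis m i
  else stdBasis m ⟨(z : ℕ) - 1, by omega⟩

/-!
Since `∑_z e(z) = 0` and `e(i+1)` is the `i`-th standard basis vector, a function
`f : O → ℝ` is of the form `f z = a - ⟨U, e z⟩` exactly when `a` is the mean of `f` and
`U i = a - f (i+1)`. Applied to the last coordinate for each fixed prefix `y`, this determines
`U_{T-1}(y)` and leaves the mean `y ↦ a(y)`, a function of `T - 1` coordinates, to be represented
by `c` and `U_0, …, U_{T-2}`: induction on `T`.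
-/

theorem balancedEncoding_zero (m : ℕ) : balancedEncoding m 0 = -1 := by
  ext i
  simp [balancedEncoding, stdBasis]

theorem balancedEncoding_succ (m : ℕ) (i : Fin m) :
    balancedEncoding m i.succ = Pi.single i 1 := by
  ext j
  simp [balancedEncoding, stdBasis, Pi.single_apply]

theorem sum_balancedEncoding (m : ℕ) : ∑ z, balancedEncoding m z = 0 := by
  ext j
  simp [Fin.sum_univ_succ, balancedEncoding_zero, balancedEncoding_succ, Pi.single_apply]

theorem dotProduct_balancedEncoding_zero {m : ℕ} (U : Fin m → ℝ) :
    U ⬝ᵥ balancedEncoding m 0 = -∑ i, U i := by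
  simp [balancedEncoding_zero, dotProduct]

theorem dotProduct_balancedEncoding_succ {m : ℕ} (U : Fin m → ℝ) (i : Fin m) :
    U ⬝ᵥ balancedEncoding m i.succ = U i := by
  rw [balancedEncoding_succ, dotProduct_single_one]

theorem sum_sub_dotProduct_balancedEncoding {m : ℕ} (a : ℝ) (U : Fin m → ℝ) :
    ∑ z, (a - U ⬝ᵥ balancedEncoding m z) = (m + 1) * a := by
  rw [sum_sub_distrib, ← dotProduct_sum, sum_balancedEncoding]
  simp

theorem existsUnique_sub_dotProduct_balancedEncoding {m : ℕ} (f : Fin (m + 1) → ℝ) :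
    ∃! p : ℝ × (Fin m → ℝ), ∀ z, f z = p.1 - p.2 ⬝ᵥ balancedEncoding m z := by
  set a := (∑ z, f z) / (m + 1)
  have ha : (m + 1) * a = ∑ z, f z := by
    simp only [a]; field_simp
  refine ⟨(a, fun i => a - f i.succ), ?_, ?_⟩
  · refine Fin.cases ?_ fun i => ?_
    · rw [Fin.sum_univ_succ] at ha
      simp only [dotProduct_balancedEncoding_zero, sum_sub_distrib, sum_const,
        card_univ, Fintype.card_fin, nsmul_eq_mul]
      linarith
    · simp [dotProduct_balancedEncoding_succ]
  · rintro ⟨b, V⟩ hf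
    have hb : b = a := by
      have := sum_sub_dotProduct_balancedEncoding b V
      simp only [← hf] at this
      have hm : (m : ℝ) + 1 ≠ 0 := by positivity
      exact mul_left_cancel₀ hm (this.symm.trans ha.symm)
    subst hb
    refine Prod.ext rfl (funext fun i => ?_)
    have := hf i.succ
    rw [dotProduct_balancedEncoding_succ] at this
    dsimp only
    linarith

def causalSum {m T : ℕ} (U : (t : Fin T) → (Fin t → Fin (m + 1)) → Fin m → ℝ)
    (z : Fin T → Fin (m + 1)) : ℝ :=
  ∑ t : Fin T, U t (fun j => z (j.castLE t.isLt.le)) ⬝ᵥ balancedEncoding m (z t)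

theorem Fin.snoc_castLE {α : Type*} {T t : ℕ} (y : Fin T → α) (x : α) (ht : t ≤ T)
    (ht' : t ≤ T + 1) (j : Fin t) :
    Fin.snoc (α := fun _ => α) y x (j.castLE ht') = y (j.castLE ht) :=
  Fin.snoc_castSucc (α := fun _ => α) (p := y) (x := x) (i := j.castLE ht)

theorem causalSum_snoc {m T : ℕ}
    (U : (t : Fin (T + 1)) → (Fin t → Fin (m + 1)) → Fin m → ℝ)
    (y : Fin T → Fin (m + 1)) (x : Fin (m + 1)) :
    causalSum U (Fin.snoc y x) =
      causalSum (Fin.init U) y + U (Fin.last T) y ⬝ᵥ balancedEncoding m x := by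
  rw [causalSum, Fin.sum_univ_castSucc, Fin.snoc_last]
  congr 1
  · refine sum_congr rfl fun t _ => ?_
    rw [Fin.snoc_castSucc]
    congr 2
    exact funext (Fin.snoc_castLE y x _ _)
  · congr 2
    exact funext (Fin.snoc_castLE y x le_rfl _)

theorem forall_eq_sub_causalSum_iff_snoc {m T : ℕ} (s : (Fin (T + 1) → Fin (m + 1)) → ℝ)
    (c : ℝ) (U : (t : Fin (T + 1)) → (Fin t → Fin (m + 1)) → Fin m → ℝ) :
    (∀ z, s z = c - causalSum U z) ↔
      ∀ y x, s (Fin.snoc y x) =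
        (c - causalSum (Fin.init U) y) - U (Fin.last T) y ⬝ᵥ balancedEncoding m x := by
  refine ⟨fun h y x => by rw [h, causalSum_snoc, sub_sub], fun h z => ?_⟩
  rw [← Fin.snoc_init_self z, h, causalSum_snoc, sub_sub]

theorem existsUnique_eq_sub_causalSum {m : ℕ} :
    ∀ (T : ℕ) (s : (Fin T → Fin (m + 1)) → ℝ),
      ∃! p : ℝ × ((t : Fin T) → (Fin t → Fin (m + 1)) → Fin m → ℝ),
        ∀ z, s z = p.1 - causalSum p.2 z
  | 0, s => by
    refine ⟨(s Fin.elim0, fun t => t.elim0), fun z => ?_, fun p hp => ?_⟩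
    · simp [causalSum, Subsingleton.elim z Fin.elim0]
    · have := hp Fin.elim0
      simp only [causalSum, univ_eq_empty, sum_empty, sub_zero] at this
      exact Prod.ext this.symm (funext fun t => t.elim0)
  | T + 1, s => by
    choose q hq hq_unique using fun y : Fin T → Fin (m + 1) =>
      existsUnique_sub_dotProduct_balancedEncoding fun x => s (Fin.snoc y x)
    obtain ⟨⟨c, V⟩, hV, hV_unique⟩ := existsUnique_eq_sub_causalSum T fun y => (q y).1
    refine ⟨(c, Fin.snoc V fun y => (q y).2),
      (forall_eq_sub_causalSum_iff_snoc _ _ _).mpr fun y x => ?_, ?_⟩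
    · simpa only [Fin.init_snoc, Fin.snoc_last, ← hV y] using hq y x
    · rintro ⟨c', U'⟩ hU'
      rw [forall_eq_sub_causalSum_iff_snoc] at hU'
      have hq' y : (c' - causalSum (Fin.init U') y, U' (Fin.last T) y) = q y :=
        hq_unique y _ (hU' y)
      have hinit : (c', Fin.init U') = (c, V) :=
        hV_unique _ fun y => by rw [← hq' y]
      obtain ⟨rfl, hV'⟩ := Prod.mk.inj hinit
      have hlast : U' (Fin.last T) = fun y => (q y).2 :=
        funext fun y => congrArg Prod.snd (hq' y)
      rw [← Fin.snoc_init_self U', hV', hlast]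
      rfl

theorem exists_unique_causal_representation (m T : ℕ)
    (s : (Fin T → Fin (m + 1)) → ℝ) :
    ∃! p : ℝ × ((t : Fin T) → ((Fin (t : ℕ) → Fin (m + 1)) → Fin m → ℝ)),
      ∀ z : Fin T → Fin (m + 1),
        s z = p.1 - ∑ t : Fin T, ∑ i : Fin m,
          p.2 t (fun j : Fin (t : ℕ) => z (j.castLE t.isLt.le)) i *
            balancedEncoding m (z t) i :=
  existsUnique_eq_sub_causalSum T s
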